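/- arXiv:2104.04321 — 4 statements merged into one kernel-verified Lean document; each statement's English description precedes it below -/
import Mathlib

section
/- Let n, r, q be positive integers, let P31 ∈ ℝ^{r×r} be a symmetric positive definite matrix, and let P11 ∈ ℝ^{n×n}, P21 ∈ ℝ^{n×r}, H ∈ ℝ^{q×n} be arbitrary real matrices. Define f(Hr) := tr(H P11 Hᵀ − 2 Hr P21ᵀ Hᵀ + Hr P31 Hrᵀ) for Hr ∈ ℝ^{q×r}. Then for every Hr ∈ ℝ^{q×r}, f(Hr) ≥ f(H P21 P31⁻¹); i.e., the choice Hr = H P21 P31⁻¹ globally minimizes f. -/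
/-!
Completing the square: for symmetric invertible `P` and `K = B P⁻¹`,
`tr(X P Xᵀ) - 2 tr(X Bᵀ) = tr((X - K) P (X - K)ᵀ) - tr(B P⁻¹ Bᵀ)`,
and the first term on the right is nonnegative when `P` is positive definite. The objective `f`
is of this form with `P = P31`, `B = H P21`, up to the constant `tr(H P11 Hᵀ)`.
-/

open Matrix

namespace Matrix

variable {R : Type*} [CommRing R] {m k : Type*} [Fintype m] [Fintype k] [DecidableEq k]

theorem trace_quadratic_complete_square {P : Matrix k k R} (hP : P.IsSymm) (hdet : IsUnit P.det)
    (B X : Matrix m k R) :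
    trace ((X - B * P⁻¹) * P * (X - B * P⁻¹)ᵀ) =
      trace (X * P * Xᵀ) - 2 * trace (X * Bᵀ) + trace (B * P⁻¹ * Bᵀ) := by
  have hPK : P * (B * P⁻¹)ᵀ = Bᵀ := by
    rw [transpose_mul, hP.inv.eq, ← Matrix.mul_assoc, mul_nonsing_inv _ hdet, Matrix.one_mul]
  have hcross : trace (B * P⁻¹ * P * Xᵀ) = trace (X * Bᵀ) := by
    rw [nonsing_inv_mul_cancel_right _ _ hdet, ← trace_transpose, transpose_mul, transpose_transpose]
  simp only [transpose_sub, Matrix.sub_mul, Matrix.mul_sub, trace_sub, Matrix.mul_assoc _ P, hPK]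
  rw [← Matrix.mul_assoc (B * P⁻¹), hcross, Matrix.mul_assoc]
  ring

theorem trace_quadratic_mul_inv_le {P : Matrix k k ℝ} (hP : P.PosDef) (B X : Matrix m k ℝ) :
    trace (B * P⁻¹ * P * (B * P⁻¹)ᵀ) - 2 * trace (B * P⁻¹ * Bᵀ) ≤
      trace (X * P * Xᵀ) - 2 * trace (X * Bᵀ) := by
  have hsymm : P.IsSymm := by simpa using hP.isHermitian
  have hdet : IsUnit P.det := hP.det_pos.ne'.isUnit
  have hsq := (hP.posSemidef.mul_mul_conjTranspose_same (X - B * P⁻¹)).trace_nonneg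
  have hK := trace_quadratic_complete_square hsymm hdet B (B * P⁻¹)
  rw [conjTranspose_eq_transpose_of_trivial, trace_quadratic_complete_square hsymm hdet] at hsq
  rw [sub_self, Matrix.zero_mul, Matrix.zero_mul, trace_zero] at hK
  linarith

end Matrix

theorem stmt0_general {n r q : ℕ}
    (P31 : Matrix (Fin r) (Fin r) ℝ) (hP31 : P31.PosDef)
    (P11 : Matrix (Fin n) (Fin n) ℝ) (P21 : Matrix (Fin n) (Fin r) ℝ)
    (H : Matrix (Fin q) (Fin n) ℝ)
    (f : Matrix (Fin q) (Fin r) ℝ → ℝ)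
    (hf : ∀ Hr : Matrix (Fin q) (Fin r) ℝ,
      f Hr = (H * P11 * Hᵀ - (2 : ℝ) • (Hr * P21ᵀ * Hᵀ) + Hr * P31 * Hrᵀ).trace) :
    ∀ Hr : Matrix (Fin q) (Fin r) ℝ, f (H * P21 * P31⁻¹) ≤ f Hr := by
  intro Hr
  have hcross (X : Matrix (Fin q) (Fin r) ℝ) : X * P21ᵀ * Hᵀ = X * (H * P21)ᵀ := by
    rw [transpose_mul, Matrix.mul_assoc]
  simp only [hf, trace_add, trace_sub, trace_smul, smul_eq_mul, hcross]
  linarith [trace_quadratic_mul_inv_le hP31 (H * P21) Hr]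

/-- The choice `Hr = H * P21 * P31⁻¹` globally minimizes
`f(Hr) = tr(H P11 Hᵀ − 2 Hr P21ᵀ Hᵀ + Hr P31 Hrᵀ)`. -/
theorem stmt0 {n r q : ℕ} (hn : 0 < n) (hr : 0 < r) (hq : 0 < q)
    (P31 : Matrix (Fin r) (Fin r) ℝ) (hP31 : P31.PosDef)
    (P11 : Matrix (Fin n) (Fin n) ℝ) (P21 : Matrix (Fin n) (Fin r) ℝ)
    (H : Matrix (Fin q) (Fin n) ℝ)
    (f : Matrix (Fin q) (Fin r) ℝ → ℝ)
    (hf : ∀ Hr : Matrix (Fin q) (Fin r) ℝ,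
      f Hr = (H * P11 * Hᵀ - (2 : ℝ) • (Hr * P21ᵀ * Hᵀ) + Hr * P31 * Hrᵀ).trace) :
    ∀ Hr : Matrix (Fin q) (Fin r) ℝ, f (H * P21 * P31⁻¹) ≤ f Hr :=
  stmt0_general P31 hP31 P11 P21 H f hf
end

section
/- Let D, K ∈ ℝ^{n×n} be symmetric positive definite, let P21 ∈ ℝ^{n×r} have full column rank r ≤ n, and let P31 ∈ ℝ^{r×r} be symmetric positive definite. Define W := P21 P31⁻¹, D̂r := Wᵀ D W, and K̂r := Wᵀ K W. Then D̂r and K̂r are symmetric positive definite, and the 2r×2r block matrix [[0, I_r], [−K̂r, −D̂r]] is Hurwitz (the reduced second-order model is asymptotically stable). -/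
/-!
Full column rank of `P21` and invertibility of `P31` make `W` injective, so `Wᵀ D W` and `Wᵀ K W`
are positive definite. For the stability claim, an eigenvector of `[[0, I], [-K̂r, -D̂r]]` has the
form `(x, μ x)` with `K̂r x + μ D̂r x + μ² x = 0`; pairing with `x̄` gives a quadratic
`a μ² + b μ + c = 0` with `a, b, c > 0`, whose roots all lie in the open left half-plane.
-/

open Matrix ComplexOrder

def IsHurwitz {m : Type*} [Fintype m] [DecidableEq m] (A : Matrix m m ℝ) : Prop :=
  ∀ μ ∈ spectrum ℂ (A.map Complex.ofReal), μ.re < 0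

theorem Matrix.mulVec_injective_of_rank_eq_card {K m n : Type*} [Field K] [Fintype n]
    {A : Matrix m n K} (h : A.rank = Fintype.card n) : Function.Injective A.mulVec := by
  have hker : Module.finrank K (LinearMap.ker A.mulVecLin) = 0 := by
    have := LinearMap.finrank_range_add_finrank_ker A.mulVecLin
    rw [Module.finrank_fintype_fun_eq_card] at this
    unfold Matrix.rank at h
    omega
  exact LinearMap.ker_eq_bot.mp (Submodule.finrank_eq_zero.mp hker)

theorem Matrix.star_dotProduct_map_ofReal_mulVec {n : Type*} [Fintype n] {M : Matrix n n ℝ}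
    (hM : M.IsSymm) (z : n → ℂ) :
    star z ⬝ᵥ (M.map Complex.ofReal *ᵥ z) =
      ((fun i ↦ (z i).re) ⬝ᵥ M *ᵥ (fun i ↦ (z i).re) +
        (fun i ↦ (z i).im) ⬝ᵥ M *ᵥ (fun i ↦ (z i).im) : ℝ) := by
  set a : n → ℝ := fun i ↦ (z i).re
  set b : n → ℝ := fun i ↦ (z i).im
  have hsymm : b ⬝ᵥ M *ᵥ a = a ⬝ᵥ M *ᵥ b := by
    rw [dotProduct_mulVec, ← mulVec_transpose, hM.eq, dotProduct_comm]
  apply Complex.ext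
  · simp only [dotProduct, mulVec, map_apply, Pi.star_apply, Finset.mul_sum, Complex.re_sum,
      Complex.mul_re, Complex.mul_im, Complex.ofReal_re, Complex.ofReal_im, RCLike.star_def,
      Complex.conj_re, Complex.conj_im, ← Finset.sum_add_distrib, a, b]
    exact Finset.sum_congr rfl fun i _ ↦ Finset.sum_congr rfl fun j _ ↦ by ring
  · rw [Complex.ofReal_im, ← sub_eq_zero.mpr hsymm.symm]
    simp only [dotProduct, mulVec, map_apply, Pi.star_apply, Finset.mul_sum, Complex.im_sum,
      Complex.mul_re, Complex.mul_im, Complex.ofReal_re, Complex.ofReal_im, RCLike.star_def,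
      Complex.conj_re, Complex.conj_im, ← Finset.sum_sub_distrib, a, b]
    exact Finset.sum_congr rfl fun i _ ↦ Finset.sum_congr rfl fun j _ ↦ by ring

theorem Matrix.PosDef.map_ofReal {n : Type*} [Fintype n] {M : Matrix n n ℝ} (hM : M.PosDef) :
    (M.map Complex.ofReal).PosDef := by
  refine .of_dotProduct_mulVec_pos (hM.isHermitian.map _ fun _ ↦ by simp) fun z hz ↦ ?_
  rw [star_dotProduct_map_ofReal_mulVec (isHermitian_iff_isSymm.mp hM.isHermitian),
    Complex.zero_lt_real]
  have hre := hM.posSemidef.dotProduct_mulVec_nonneg (fun i ↦ (z i).re)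
  have him := hM.posSemidef.dotProduct_mulVec_nonneg (fun i ↦ (z i).im)
  rw [star_trivial] at hre him
  by_cases h : (fun i ↦ (z i).re) = 0
  · have h' : (fun i ↦ (z i).im) ≠ 0 := fun h' ↦
      hz (funext fun i ↦ Complex.ext (congrFun h i) (congrFun h' i))
    simpa [star_trivial, h] using hM.dotProduct_mulVec_pos h'
  · have := hM.dotProduct_mulVec_pos h
    rw [star_trivial] at this
    positivity

theorem Complex.re_neg_of_quadratic_eq_zero {a b c μ : ℂ} (ha : 0 < a) (hb : 0 < b) (hc : 0 < c)
    (h : a * μ ^ 2 + b * μ + c = 0) : μ.re < 0 := by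
  rw [Complex.pos_iff] at ha hb hc
  have hre := congrArg Complex.re h
  have him := congrArg Complex.im h
  simp only [sq, Complex.add_re, Complex.add_im, Complex.mul_re, Complex.mul_im,
    ← ha.2, ← hb.2, ← hc.2, Complex.zero_re, Complex.zero_im] at hre him
  by_contra! hμ
  have him' : μ.im * (2 * a.re * μ.re + b.re) = 0 := by linear_combination him
  have : μ.im = 0 := (mul_eq_zero.mp him').resolve_right (by nlinarith)
  rw [this] at hre
  nlinarith [mul_nonneg ha.1.le (mul_nonneg hμ hμ), mul_nonneg hb.1.le hμ]

theorem isHurwitz_fromBlocks_zero_one_neg_neg {ι : Type*} [Fintype ι] [DecidableEq ι]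
    {K D : Matrix ι ι ℝ} (hK : K.PosDef) (hD : D.PosDef) :
    IsHurwitz (fromBlocks 0 1 (-K) (-D)) := by
  intro μ hμ
  rw [← spectrum_toLin', ← Module.End.hasEigenvalue_iff_mem_spectrum] at hμ
  obtain ⟨v, hv⟩ := hμ.exists_hasEigenvector
  obtain ⟨x, y, rfl⟩ : ∃ x y, v = Sum.elim x y := ⟨_, _, (Sum.elim_comp_inl_inr v).symm⟩
  have heq := hv.apply_eq_smul
  rw [toLin'_apply, fromBlocks_map, fromBlocks_mulVec] at heq
  have hy : y = μ • x := funext fun i ↦ by simpa using congrFun heq (Sum.inl i)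
  have hKD : -(K.map Complex.ofReal *ᵥ x) - D.map Complex.ofReal *ᵥ y = μ • y :=
    funext fun i ↦ by
      simpa [sub_eq_add_neg, Matrix.map_neg _ Complex.ofReal_neg, neg_mulVec] using
        congrFun heq (Sum.inr i)
  have hx : x ≠ 0 := by
    rintro rfl
    exact hv.2 (by simp [hy])
  have hquad := congrArg (star x ⬝ᵥ ·) hKD
  simp only [hy, mulVec_smul, dotProduct_sub, dotProduct_neg, dotProduct_smul,
    smul_eq_mul] at hquad
  exact Complex.re_neg_of_quadratic_eq_zero (dotProduct_star_self_pos_iff.mpr hx)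
    (hD.map_ofReal.dotProduct_mulVec_pos hx) (hK.map_ofReal.dotProduct_mulVec_pos hx)
    (by linear_combination -hquad)

theorem stmt3_general {n r : ℕ}
    (D K : Matrix (Fin n) (Fin n) ℝ) (hD : D.PosDef) (hK : K.PosDef)
    (P21 : Matrix (Fin n) (Fin r) ℝ) (hP21 : P21.rank = r)
    (P31 : Matrix (Fin r) (Fin r) ℝ) (hP31 : P31.PosDef)
    (W : Matrix (Fin n) (Fin r) ℝ) (hW : W = P21 * P31⁻¹)
    (Dr Kr : Matrix (Fin r) (Fin r) ℝ)
    (hDr : Dr = Wᵀ * D * W) (hKr : Kr = Wᵀ * K * W) :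
    Dr.PosDef ∧ Kr.PosDef ∧
    IsHurwitz (Matrix.fromBlocks (0 : Matrix (Fin r) (Fin r) ℝ)
      (1 : Matrix (Fin r) (Fin r) ℝ) (-Kr) (-Dr)) := by
  have hWrank : W.rank = Fintype.card (Fin r) := by
    rw [hW, rank_mul_eq_left_of_isUnit_det _ _ (isUnit_nonsing_inv_det _ hP31.det_pos.ne'.isUnit),
      hP21, Fintype.card_fin]
  have hWinj := mulVec_injective_of_rank_eq_card hWrank
  have hDrPos : Dr.PosDef := by
    simpa [hDr, conjTranspose_eq_transpose_of_trivial] using hD.conjTranspose_mul_mul_same hWinj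
  have hKrPos : Kr.PosDef := by
    simpa [hKr, conjTranspose_eq_transpose_of_trivial] using hK.conjTranspose_mul_mul_same hWinj
  exact ⟨hDrPos, hKrPos, isHurwitz_fromBlocks_zero_one_neg_neg hKrPos hDrPos⟩

/-- Corollary 2: with `W = P21 P31⁻¹`, the reduced matrices
`D̂r = Wᵀ D W` and `K̂r = Wᵀ K W` are symmetric positive definite, and the reduced
second-order model is asymptotically stable. -/
theorem stmt3 {n r : ℕ} (hrn : r ≤ n)
    (D K : Matrix (Fin n) (Fin n) ℝ) (hD : D.PosDef) (hK : K.PosDef)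
    (P21 : Matrix (Fin n) (Fin r) ℝ) (hP21 : P21.rank = r)
    (P31 : Matrix (Fin r) (Fin r) ℝ) (hP31 : P31.PosDef)
    (W : Matrix (Fin n) (Fin r) ℝ) (hW : W = P21 * P31⁻¹)
    (Dr Kr : Matrix (Fin r) (Fin r) ℝ)
    (hDr : Dr = Wᵀ * D * W) (hKr : Kr = Wᵀ * K * W) :
    Dr.PosDef ∧ Kr.PosDef ∧
    IsHurwitz (Matrix.fromBlocks (0 : Matrix (Fin r) (Fin r) ℝ)
      (1 : Matrix (Fin r) (Fin r) ℝ) (-Kr) (-Dr)) :=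
  stmt3_general D K hD hK P21 hP21 P31 hP31 W hW Dr Kr hDr hKr
end

section
/- Let r ≥ 3, let T ∈ ℝ^{(r−1)×(r−1)} satisfy T Tᵀ = I_{r−1} − (1/r) 1_{r−1} 1_{r−1}ᵀ, and suppose there is an integer m with 1 ≤ m ≤ r−2 such that T_{ij} T_{sj} ≤ 0 for all i ≠ s and j ∈ {1,…,r−m−1}, and T_{ij} T_{sj} ≥ 0 for all i ≠ s and j ∈ {r−m,…,r−1}. Let μ_1 ≥ μ_2 ≥ ⋯ ≥ μ_{r−1} > 0. Then for all i ≠ s in {1,…,r−1}: Σ_{j=1}^{r−1} μ_j T_{ij} T_{sj} ≤ −(1/r) μ_{r−m} < 0. -/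
/-! The off-diagonal entries of `T Tᵀ` are `-1/r`. Off the diagonal the products `T_ij T_sj`
change sign once, at `j = r - m`, and `μ` is antitone, so replacing every `μ_j` by `μ_{r-m}`
can only increase the weighted sum. -/

open Matrix

theorem Matrix.sum_mul_mul_eq_neg_of_mul_transpose_eq {ι κ R : Type*} [Fintype κ] [DecidableEq ι]
    [Ring R] {T : Matrix ι κ R} {c : R} (hT : T * Tᵀ = 1 - c • of fun _ _ => 1)
    {i s : ι} (his : i ≠ s) : ∑ j, T i j * T s j = -c := by
  simpa [mul_apply, one_apply, his] using congrFun (congrFun hT i) s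

theorem Antitone.sum_mul_le_mul_sum_of_sign_change {ι R : Type*} [Fintype ι] [LinearOrder ι]
    [Ring R] [PartialOrder R] [IsOrderedRing R] {μ a : ι → R} (hμ : Antitone μ) (p : ι)
    (hneg : ∀ j < p, a j ≤ 0) (hnonneg : ∀ j, p ≤ j → 0 ≤ a j) :
    ∑ j, μ j * a j ≤ μ p * ∑ j, a j := by
  rw [Finset.mul_sum]
  refine Finset.sum_le_sum fun j _ => ?_
  rcases lt_or_ge j p with hjp | hpj
  · exact mul_le_mul_of_nonpos_right (hμ hjp.le) (hneg j hjp)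
  · exact mul_le_mul_of_nonneg_right (hμ hpj) (hnonneg j hpj)

/-- with `r = k + 1 ≥ 3`, `T Tᵀ = I − (1/r) 1 1ᵀ`, the sign conditions on `T`,
and `μ₁ ≥ ⋯ ≥ μ_{r−1} > 0`, the off-diagonal sums satisfy
`Σⱼ μⱼ Tᵢⱼ Tₛⱼ ≤ −(1/r) μ_{r−m} < 0` for all `i ≠ s`. -/
theorem stmt9 (k : ℕ)
    (T : Matrix (Fin k) (Fin k) ℝ)
    (hTT : T * Tᵀ =
      (1 : Matrix (Fin k) (Fin k) ℝ) - (((k : ℝ) + 1)⁻¹) • Matrix.of fun _ _ => (1 : ℝ))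
    (m : ℕ) (hm1 : 1 ≤ m) (hm2 : m ≤ k - 1)
    (hsign1 : ∀ i s : Fin k, i ≠ s → ∀ j : Fin k, (j : ℕ) < k - m → T i j * T s j ≤ 0)
    (hsign2 : ∀ i s : Fin k, i ≠ s → ∀ j : Fin k, k - m ≤ (j : ℕ) → 0 ≤ T i j * T s j)
    (μ : Fin k → ℝ) (hmono : Antitone μ) (hpos : ∀ j, 0 < μ j) :
    ∀ i s : Fin k, i ≠ s →
      (∑ j, μ j * (T i j * T s j)) ≤ -(((k : ℝ) + 1)⁻¹ * μ ⟨k - m, by omega⟩) ∧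
      -(((k : ℝ) + 1)⁻¹ * μ ⟨k - m, by omega⟩) < 0 := by
  intro i s his
  set p : Fin k := ⟨k - m, by omega⟩
  have hweighted : ∑ j, μ j * (T i j * T s j) ≤ μ p * ∑ j, T i j * T s j :=
    hmono.sum_mul_le_mul_sum_of_sign_change p (fun j hj => hsign1 i s his j hj)
      (fun j hj => hsign2 i s his j hj)
  rw [sum_mul_mul_eq_neg_of_mul_transpose_eq hTT his] at hweighted
  refine ⟨by linarith, neg_neg_of_pos (mul_pos (by positivity) (hpos p))⟩
end

section
/- Let r ≥ 2 and let λ_1 ≥ λ_2 ≥ ⋯ ≥ λ_{r−1} > 0 be real numbers. Then there exists a symmetric matrix L ∈ ℝ^{r×r} with L_{ij} ≤ 0 for all i ≠ j and L·1_r = 0 whose multiset of eigenvalues (with multiplicity) is exactly {0, λ_1, λ_2, …, λ_{r−1}}. -/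
/-!
Conjugate `D = diag d`, `d = (0, λ₁, …, λ_{r-1})`, by the orthogonal Helmert matrix `H`, whose
columns are the normalised vectors `v₀ = (1, …, 1)` and `vₘ = (1, …, 1, -m, 0, …, 0)` (`m` ones).
Every column but the first sums to zero, so `L = H D Hᵀ` kills `1`. For `i < j`, orthogonality of
the rows of `H` gives `L i j = ∑ c, (d c - d j) H i c H j c`, and each term is `≤ 0`: `H j c`
vanishes for `0 < c < j`, while for `c = 0` or `c > j` both entries are nonnegative and
`d c ≤ d j`.
-/

open Matrix

section ConjDiagonal

variable {ι R : Type*} [Fintype ι] [DecidableEq ι] [CommRing R]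

theorem Matrix.isSymm_mul_diagonal_mul_transpose (U : Matrix ι ι R) (d : ι → R) :
    (U * diagonal d * Uᵀ).IsSymm := by
  rw [IsSymm, transpose_mul, transpose_mul, transpose_transpose, diagonal_transpose,
    Matrix.mul_assoc]

theorem Matrix.mul_diagonal_mul_transpose_apply (U : Matrix ι ι R) (d : ι → R) (i j : ι) :
    (U * diagonal d * Uᵀ) i j = ∑ c, d c * (U i c * U j c) := by
  rw [mul_apply]
  exact Finset.sum_congr rfl fun c _ => by rw [mul_diagonal, transpose_apply]; ring

theorem Matrix.mul_diagonal_mul_transpose_mulVec_one (U : Matrix ι ι R) (d : ι → R)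
    (h : ∀ c, d c = 0 ∨ ∑ i, U i c = 0) :
    (U * diagonal d * Uᵀ) *ᵥ (fun _ => 1) = 0 := by
  have hUt : Uᵀ *ᵥ (fun _ => 1) = fun c => ∑ i, U i c := by
    ext c
    simp [mulVec, dotProduct]
  have hD : diagonal d *ᵥ (fun c => ∑ i, U i c) = 0 := by
    ext c
    rw [mulVec_diagonal]
    rcases h c with h | h <;> simp [h]
  rw [← mulVec_mulVec, ← mulVec_mulVec, hUt, hD, mulVec_zero]

theorem Matrix.mul_diagonal_mul_transpose_apply_eq_sum_sub (U : Matrix ι ι R) (hU : U * Uᵀ = 1)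
    (d : ι → R) (a : R) {i j : ι} (hij : i ≠ j) :
    (U * diagonal d * Uᵀ) i j = ∑ c, (d c - a) * (U i c * U j c) := by
  have hrow : ∑ c, U i c * U j c = 0 := by
    simpa [mul_apply, hij] using congrFun (congrFun hU i) j
  simp only [sub_mul, Finset.sum_sub_distrib, ← Finset.mul_sum, hrow, mul_zero, sub_zero]
  exact mul_diagonal_mul_transpose_apply U d i j

end ConjDiagonal

section Helmert

def helmertVec (m i : ℕ) : ℝ := if m = 0 ∨ i < m then 1 else if i = m then -m else 0

theorem helmertVec_zero_left (i : ℕ) : helmertVec 0 i = 1 := by simp [helmertVec]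

theorem helmertVec_of_lt {m i : ℕ} (h : i < m) : helmertVec m i = 1 := by simp [helmertVec, h]

theorem helmertVec_self {m : ℕ} (hm : m ≠ 0) : helmertVec m m = -m := by simp [helmertVec, hm]

theorem helmertVec_of_gt {m i : ℕ} (hm : m ≠ 0) (h : m < i) : helmertVec m i = 0 := by
  simp [helmertVec, hm, h.not_gt, h.ne']

theorem helmertVec_self_ne_zero (m : ℕ) : helmertVec m m ≠ 0 := by
  rcases eq_or_ne m 0 with rfl | hm
  · simp [helmertVec_zero_left]
  · simp [helmertVec_self hm, hm]

theorem helmertVec_nonneg {m i : ℕ} (h : m = 0 ∨ i < m) : 0 ≤ helmertVec m i := by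
  simp [helmertVec, h]

theorem sum_helmertVec {m n : ℕ} (hm : m ≠ 0) (hmn : m < n) :
    ∑ i : Fin n, helmertVec m i = 0 := by
  rw [Fin.sum_univ_eq_sum_range (helmertVec m), ← Finset.sum_range_add_sum_Ico _ hmn,
    Finset.sum_eq_zero (s := Finset.Ico (m + 1) n) fun i hi => helmertVec_of_gt hm (by simp at hi; omega),
    Finset.sum_range_succ, Finset.sum_congr rfl fun i hi => helmertVec_of_lt (Finset.mem_range.1 hi)]
  simp [helmertVec_self hm]

-- `helmertVec d` is `1` on the support of `helmertVec c`.
theorem helmertVec_mul_of_lt {c d : ℕ} (hc : c ≠ 0) (hcd : c < d) (i : ℕ) :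
    helmertVec c i * helmertVec d i = helmertVec c i := by
  rcases lt_or_ge c i with h | h
  · simp [helmertVec_of_gt hc h]
  · rw [helmertVec_of_lt (h.trans_lt hcd), mul_one]

theorem sum_helmertVec_mul_of_ne {c d n : ℕ} (hcd : c ≠ d) (hc : c < n) (hd : d < n) :
    ∑ i : Fin n, helmertVec c i * helmertVec d i = 0 := by
  wlog hlt : c < d generalizing c d
  · simpa only [mul_comm] using this hcd.symm hd hc (by omega)
  rcases eq_or_ne c 0 with rfl | hc0
  · simpa [helmertVec_zero_left] using sum_helmertVec (by omega) hd
  · simpa [helmertVec_mul_of_lt hc0 hlt] using sum_helmertVec hc0 hc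

noncomputable def helmert (n : ℕ) : Matrix (Fin n) (Fin n) ℝ :=
  of fun i c => helmertVec c i / √(∑ i' : Fin n, helmertVec c i' ^ 2)

theorem helmert_apply (n : ℕ) (i c : Fin n) :
    helmert n i c = helmertVec c i / √(∑ i' : Fin n, helmertVec c i' ^ 2) := rfl

theorem helmert_transpose_mul_self (n : ℕ) : (helmert n)ᵀ * helmert n = 1 := by
  ext c d
  simp only [mul_apply, transpose_apply, helmert_apply, div_mul_div_comm, ← Finset.sum_div,
    one_apply]
  split_ifs with hcd
  · subst hcd
    have hpos : 0 < ∑ i : Fin n, helmertVec c i ^ 2 :=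
      lt_of_lt_of_le (sq_pos_of_ne_zero (helmertVec_self_ne_zero c))
        (Finset.single_le_sum (f := fun i : Fin n => helmertVec c i ^ 2)
          (fun i _ => sq_nonneg _) (Finset.mem_univ c))
    rw [← sq, Real.sq_sqrt hpos.le]
    simp only [← sq]
    exact div_self hpos.ne'
  · rw [sum_helmertVec_mul_of_ne (Fin.val_injective.ne hcd) c.isLt d.isLt, zero_div]

theorem helmert_mul_transpose_self (n : ℕ) : helmert n * (helmert n)ᵀ = 1 :=
  mul_eq_one_comm.mp (helmert_transpose_mul_self n)

theorem sum_helmert_of_ne_zero {n : ℕ} {c : Fin n} (hc : (c : ℕ) ≠ 0) :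
    ∑ i, helmert n i c = 0 := by
  simp only [helmert_apply, ← Finset.sum_div, sum_helmertVec hc c.isLt, zero_div]

theorem helmert_apply_nonneg {n : ℕ} {i c : Fin n} (h : (c : ℕ) = 0 ∨ i < c) :
    0 ≤ helmert n i c :=
  div_nonneg (helmertVec_nonneg h) (Real.sqrt_nonneg _)

theorem helmert_apply_eq_zero {n : ℕ} {i c : Fin n} (hc : (c : ℕ) ≠ 0) (h : c < i) :
    helmert n i c = 0 := by
  rw [helmert_apply, helmertVec_of_gt hc h, zero_div]

theorem helmert_mul_diagonal_cons_mul_transpose_apply_nonpos {n : ℕ} {a : ℝ} {lam : Fin n → ℝ}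
    (hmono : Antitone lam) (ha : ∀ i, a ≤ lam i) {i j : Fin (n + 1)} (hij : i ≠ j) :
    (helmert (n + 1) * diagonal (Fin.cons a lam) * (helmert (n + 1))ᵀ) i j ≤ 0 := by
  wlog hlt : i < j generalizing i j
  · rw [← (isSymm_mul_diagonal_mul_transpose _ _).apply]
    exact this hij.symm (lt_of_le_of_ne (not_lt.1 hlt) hij.symm)
  obtain ⟨j, rfl⟩ := Fin.exists_succ_eq.2 (Fin.ne_zero_of_lt hlt)
  rw [mul_diagonal_mul_transpose_apply_eq_sum_sub _ (helmert_mul_transpose_self _) _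
    (lam j) hij]
  refine Finset.sum_nonpos fun c _ => ?_
  rcases lt_trichotomy c j.succ with hc | rfl | hc
  · cases c using Fin.cases with
    | zero =>
      exact mul_nonpos_of_nonpos_of_nonneg (by simpa using ha j)
        (mul_nonneg (helmert_apply_nonneg (Or.inl rfl)) (helmert_apply_nonneg (Or.inl rfl)))
    | succ c => simp [helmert_apply_eq_zero (Nat.succ_ne_zero c) hc]
  · simp
  · obtain ⟨c, rfl⟩ := Fin.exists_succ_eq.2 (Fin.ne_zero_of_lt hc)
    exact mul_nonpos_of_nonpos_of_nonneg (by simpa using hmono (Fin.succ_lt_succ_iff.1 hc).le)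
      (mul_nonneg (helmert_apply_nonneg (Or.inr (hlt.trans hc)))
        (helmert_apply_nonneg (Or.inr hc)))

end Helmert

theorem stmt16_general (k : ℕ)
    (lam : Fin k → ℝ) (hmono : Antitone lam) (hpos : ∀ i, 0 < lam i) :
    ∃ L : Matrix (Fin (k + 1)) (Fin (k + 1)) ℝ,
      L.IsSymm ∧
      (∀ i j, i ≠ j → L i j ≤ 0) ∧
      L.mulVec (fun _ => (1 : ℝ)) = 0 ∧
      ∃ U : Matrix (Fin (k + 1)) (Fin (k + 1)) ℝ,
        U * Uᵀ = 1 ∧ L = U * Matrix.diagonal (Fin.cons 0 lam) * Uᵀ := by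
  refine ⟨_, isSymm_mul_diagonal_mul_transpose _ _,
    fun i j hij => helmert_mul_diagonal_cons_mul_transpose_apply_nonpos hmono
      (fun i => (hpos i).le) hij,
    mul_diagonal_mul_transpose_mulVec_one _ _ fun c => ?_, helmert (k + 1),
    helmert_mul_transpose_self _, rfl⟩
  cases c using Fin.cases with
  | zero => exact Or.inl rfl
  | succ c => exact Or.inr (sum_helmert_of_ne_zero (Nat.succ_ne_zero c))

/-- with `r = k + 1 ≥ 2`, for any prescribed `λ₁ ≥ ⋯ ≥ λ_{r−1} > 0` there
is a symmetric matrix `L` with nonpositive off-diagonal entries and `L 1 = 0` (i.e. an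
undirected weighted graph Laplacian) whose eigenvalues, with multiplicity, are exactly
`{0, λ₁, …, λ_{r−1}}`. -/
theorem stmt16 (k : ℕ) (hk : 1 ≤ k)
    (lam : Fin k → ℝ) (hmono : Antitone lam) (hpos : ∀ i, 0 < lam i) :
    ∃ L : Matrix (Fin (k + 1)) (Fin (k + 1)) ℝ,
      L.IsSymm ∧
      (∀ i j, i ≠ j → L i j ≤ 0) ∧
      L.mulVec (fun _ => (1 : ℝ)) = 0 ∧
      ∃ U : Matrix (Fin (k + 1)) (Fin (k + 1)) ℝ,
        U * Uᵀ = 1 ∧ L = U * Matrix.diagonal (Fin.cons 0 lam) * Uᵀ :=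
  stmt16_general k lam hmono hpos
end
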